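/- There exist constants C > 0 and δ > 0 such that for all α > 0 and Δ > 0 with αΔ < δ, the aliased Matérn spectral density with ν = 1/2, d = 1 evaluated at the highest frequency 1/(2Δ) satisfies | M_Δ(1/(2Δ); 1/2, 1)/(2/α) − α²Δ²/4 + α⁴Δ⁴/48 | ≤ C α⁶Δ⁶. In particular M_Δ(1/(2Δ); 1/2, 1)/(2/α) = α²Δ²/4 + O(α⁴Δ⁴) as αΔ → 0. -/

import Mathlib

/-!
With `s = (αΔ)²` and `x_k = (π(2k+1))²`, the `k`-th aliased term divided by `2/α` is
`s/(s + x_k) = s/x_k - s²/x_k² + s³/(x_k²(s + x_k))`. Removing the even terms from `ζ(2)` and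
`ζ(4)` gives `∑ 1/x_k = 1/4` and `∑ 1/x_k² = 1/48`, which produce the two leading terms; the
remainder is nonnegative and, as `x_k ≥ 1`, at most `s³ ∑ 1/x_k² = s³/48`.
-/

open Real

theorem HasSum.nat_odd_one_div_pow {p : ℕ} {S : ℝ}
    (hS : HasSum (fun n : ℕ => 1 / (n : ℝ) ^ p) S) :
    HasSum (fun n : ℕ => 1 / (2 * (n : ℝ) + 1) ^ p) ((1 - 1 / 2 ^ p) * S) := by
  have heven : HasSum (fun n : ℕ => 1 / ((2 * n : ℕ) : ℝ) ^ p) (1 / 2 ^ p * S) :=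
    (hS.mul_left (1 / 2 ^ p)).congr_fun fun n => by push_cast; rw [mul_pow, one_div_mul_one_div]
  obtain ⟨T, hodd⟩ : Summable (fun n : ℕ => 1 / ((2 * n + 1 : ℕ) : ℝ) ^ p) :=
    hS.summable.comp_injective (i := fun n => 2 * n + 1) fun _ _ h => by simp only at h; omega
  have hT : T = (1 - 1 / 2 ^ p) * S := by
    have := (HasSum.even_add_odd (f := fun n : ℕ => 1 / (n : ℝ) ^ p) heven hodd).unique hS
    linarith
  subst hT
  exact hodd.congr_fun fun n => by push_cast; rfl

theorem HasSum.int_odd_one_div_pow {p : ℕ} (hp : Even p) {S : ℝ}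
    (hS : HasSum (fun n : ℕ => 1 / (n : ℝ) ^ p) S) :
    HasSum (fun k : ℤ => 1 / (2 * (k : ℝ) + 1) ^ p) (2 * (1 - 1 / 2 ^ p) * S) := by
  have hnat := hS.nat_odd_one_div_pow
  rw [mul_assoc, two_mul]
  refine HasSum.of_nat_of_neg_add_one (hnat.congr_fun fun n => by push_cast; rfl)
    (hnat.congr_fun fun n => ?_)
  push_cast
  rw [show 2 * (-((n : ℝ) + 1)) + 1 = -(2 * n + 1) by ring, hp.neg_pow]

/-- `(2π ω_k Δ)²` for the aliases `ω_k = (k + 1/2)/Δ` of the Nyquist frequency `1/(2Δ)`. -/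
noncomputable def nyquistAliasSq (k : ℤ) : ℝ := (π * (2 * k + 1)) ^ 2

theorem one_le_nyquistAliasSq (k : ℤ) : 1 ≤ nyquistAliasSq k := by
  have hodd : (1 : ℝ) ≤ |2 * (k : ℝ) + 1| := by
    exact_mod_cast Int.one_le_abs (by omega : 2 * k + 1 ≠ 0)
  have hπ : 1 ≤ π := by linarith [pi_gt_three]
  rw [nyquistAliasSq, one_le_sq_iff_one_le_abs, abs_mul, abs_of_pos pi_pos]
  nlinarith

theorem hasSum_one_div_nyquistAliasSq :
    HasSum (fun k : ℤ => 1 / nyquistAliasSq k) (1 / 4) := by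
  have := (hasSum_zeta_two.int_odd_one_div_pow even_two).mul_left (1 / π ^ 2)
  rw [show 1 / π ^ 2 * (2 * (1 - 1 / 2 ^ 2) * (π ^ 2 / 6)) = 1 / 4 by field_simp; ring] at this
  exact this.congr_fun fun k => by rw [nyquistAliasSq, mul_pow, one_div_mul_one_div]

theorem hasSum_one_div_nyquistAliasSq_sq :
    HasSum (fun k : ℤ => 1 / nyquistAliasSq k ^ 2) (1 / 48) := by
  have := (hasSum_zeta_four.int_odd_one_div_pow (by decide)).mul_left (1 / π ^ 4)
  rw [show 1 / π ^ 4 * (2 * (1 - 1 / 2 ^ 4) * (π ^ 4 / 90)) = 1 / 48 by field_simp; ring] at this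
  exact this.congr_fun fun k => by rw [nyquistAliasSq, ← pow_mul, mul_pow, one_div_mul_one_div]

theorem div_add_eq_div_sub_sq_div_sq_add {K : Type*} [Field K] {s x : K} (hx : x ≠ 0) (hsx : s + x ≠ 0) :
    s / (s + x) = s / x - s ^ 2 / x ^ 2 + s ^ 3 / (x ^ 2 * (s + x)) := by
  field_simp
  ring

theorem nyquist_term_div_eq {α Δ : ℝ} (hα : 0 < α) (hΔ : 0 < Δ) (k : ℤ) :
    2 * α / (α ^ 2 + 4 * π ^ 2 * (1 / (2 * Δ) + (k : ℝ) / Δ) ^ 2) / (2 / α)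
      = (α * Δ) ^ 2 / ((α * Δ) ^ 2 + nyquistAliasSq k) := by
  rw [nyquistAliasSq]
  field_simp
  ring

theorem exists_hasSum_div_add_nyquistAliasSq {s : ℝ} (hs : 0 ≤ s) :
    ∃ R, 0 ≤ R ∧ R ≤ s ^ 3 / 48 ∧
      HasSum (fun k : ℤ => s / (s + nyquistAliasSq k)) (s / 4 - s ^ 2 / 48 + R) := by
  set r : ℤ → ℝ := fun k => s ^ 3 / (nyquistAliasSq k ^ 2 * (s + nyquistAliasSq k))
  have hr_nonneg (k : ℤ) : 0 ≤ r k := by have := one_le_nyquistAliasSq k; positivity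
  have hr_le (k : ℤ) : r k ≤ s ^ 3 * (1 / nyquistAliasSq k ^ 2) := by
    rw [mul_one_div]
    have := one_le_nyquistAliasSq k
    exact div_le_div_of_nonneg_left (by positivity) (by positivity)
      (le_mul_of_one_le_right (by positivity) (by linarith))
  have hbound := hasSum_one_div_nyquistAliasSq_sq.mul_left (s ^ 3)
  have hr : Summable r := hbound.summable.of_nonneg_of_le hr_nonneg hr_le
  refine ⟨∑' k, r k, tsum_nonneg hr_nonneg, ?_, ?_⟩
  · calc ∑' k, r k ≤ s ^ 3 * (1 / 48) := hasSum_le hr_le hr.hasSum hbound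
      _ = s ^ 3 / 48 := by ring
  · have hmain := ((hasSum_one_div_nyquistAliasSq.mul_left s).sub
      (hasSum_one_div_nyquistAliasSq_sq.mul_left (s ^ 2))).add hr.hasSum
    simp only [mul_one_div] at hmain
    refine hmain.congr_fun fun k => ?_
    have := one_le_nyquistAliasSq k
    exact div_add_eq_div_sub_sq_div_sq_add (by positivity) (by positivity)

theorem matern_half_d1_nyquist_expansion :
    ∃ C > (0 : ℝ), ∃ δ > (0 : ℝ), ∀ α Δ : ℝ, 0 < α → 0 < Δ → α * Δ < δ →
      |(∑' k : ℤ, 2 * α / (α ^ 2 + 4 * π ^ 2 * (1 / (2 * Δ) + (k : ℝ) / Δ) ^ 2)) / (2 / α)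
          - α ^ 2 * Δ ^ 2 / 4 + α ^ 4 * Δ ^ 4 / 48|
        ≤ C * α ^ 6 * Δ ^ 6 := by
  refine ⟨1 / 48, by norm_num, 1, one_pos, fun α Δ hα hΔ _ => ?_⟩
  obtain ⟨R, hR_nonneg, hR_le, hsum⟩ := exists_hasSum_div_add_nyquistAliasSq (sq_nonneg (α * Δ))
  have htsum : (∑' k : ℤ, 2 * α / (α ^ 2 + 4 * π ^ 2 * (1 / (2 * Δ) + (k : ℝ) / Δ) ^ 2))
      / (2 / α) = (α * Δ) ^ 2 / 4 - ((α * Δ) ^ 2) ^ 2 / 48 + R := by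
    rw [← tsum_div_const, ← hsum.tsum_eq]
    exact tsum_congr (nyquist_term_div_eq hα hΔ)
  rw [htsum, show (α * Δ) ^ 2 / 4 - ((α * Δ) ^ 2) ^ 2 / 48 + R - α ^ 2 * Δ ^ 2 / 4
      + α ^ 4 * Δ ^ 4 / 48 = R by ring, abs_of_nonneg hR_nonneg]
  linarith
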